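/- arXiv:2011.11056 — 2 statements merged into one kernel-verified Lean document; each statement's English description precedes it below -/
import Mathlib

section
/- Let a ≥ 14 be an integer and define F_m(x) := ((x+4)/3)·P_{m−1}(x) − P_m(x). If F_m(x) > 0 for all real x > 2 and all integers m with 4 ≤ m < a, then F_a′(x) > 0 for all real x > 2. -/
open Polynomial Finset

/-- The polynomials `P n` defined by `P 0 = 1` and
`n * P n = X * ∑_{k=1}^n σ(k) * P (n-k)`, i.e. the coefficients of
`∏ (1 - q^j)^{-x} = ∑ P_n(x) q^n`. -/
noncomputable def P : ℕ → Polynomial ℝ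
  | 0 => 1
  | n + 1 => ((n + 1 : ℝ)⁻¹) • (X * ∑ k ∈ Finset.range (n + 1),
      ((∑ d ∈ (k + 1).divisors, d : ℕ) : ℝ) • P (n - k))

/-- `Δ a b = P (a-1) * P (b+1) - P a * P b`. -/
noncomputable def Δ (a b : ℕ) : Polynomial ℝ :=
  P (a - 1) * P (b + 1) - P a * P b

/-- real sigma -/
noncomputable def sg (k : ℕ) : ℝ := ((∑ d ∈ k.divisors, d : ℕ) : ℝ)

lemma P_succ (n : ℕ) : P (n+1) = ((n + 1 : ℝ)⁻¹) • (X * ∑ k ∈ Finset.range (n + 1),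
    sg (k+1) • P (n - k)) := by rw [P]; rfl

lemma Prec (n : ℕ) : ((n : ℝ) + 1) • P (n+1)
    = X * ∑ k ∈ Finset.range (n + 1), sg (k+1) • P (n - k) := by
  rw [P_succ, smul_smul, mul_inv_cancel₀ (by positivity), one_smul]

lemma Prec_eval (n : ℕ) (x : ℝ) : ((n : ℝ) + 1) * (P (n+1)).eval x
    = x * ∑ k ∈ Finset.range (n + 1), sg (k+1) * (P (n - k)).eval x := by
  have h := congrArg (Polynomial.eval x) (Prec n)
  simpa [eval_finset_sum, smul_eq_mul] using h

lemma sg_pos (k : ℕ) : 0 < sg (k+1) := by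
  have : 0 < ∑ d ∈ (k+1).divisors, d := by
    apply Finset.sum_pos
    · intro d hd; exact Nat.pos_of_mem_divisors hd
    · exact ⟨k+1, Nat.mem_divisors_self _ (Nat.succ_ne_zero k)⟩
  unfold sg; exact_mod_cast this

lemma sg_ge (k : ℕ) : (k : ℝ) + 1 ≤ sg (k+1) := by
  have : k + 1 ≤ ∑ d ∈ (k+1).divisors, d :=
    Finset.single_le_sum (fun d _ => Nat.zero_le d) (Nat.mem_divisors_self _ (Nat.succ_ne_zero k))
  unfold sg; exact_mod_cast this

lemma sg_le (k : ℕ) : sg (k+1) ≤ ((k:ℝ)+1) * ((k:ℝ)+2) / 2 := by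
  have h1 : (∑ d ∈ (k+1).divisors, d) ≤ ∑ d ∈ Finset.range (k+2), d := by
    apply Finset.sum_le_sum_of_subset
    intro d hd
    exact Finset.mem_range.mpr (Nat.lt_succ_of_le (Nat.le_of_dvd (Nat.succ_pos k)
      (Nat.mem_divisors.mp hd).1))
  have h2 : (∑ d ∈ Finset.range (k+2), d) * 2 = (k+2) * (k+1) := by
    rw [Finset.sum_range_id_mul_two]; simp
  have h1' : sg (k+1) ≤ ((∑ d ∈ Finset.range (k+2), d : ℕ) : ℝ) := by
    unfold sg; exact_mod_cast h1
  have h2' : ((∑ d ∈ Finset.range (k+2), d : ℕ) : ℝ) * 2 = ((k:ℝ)+2) * ((k:ℝ)+1) := by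
    exact_mod_cast congrArg (Nat.cast : ℕ → ℝ) h2
  linarith

lemma Ppos : ∀ n, ∀ x : ℝ, 0 < x → 0 < (P n).eval x := by
  intro n
  induction n using Nat.strong_induction_on with
  | _ n ih =>
    match n with
    | 0 => intro x _; simp [P]
    | Nat.succ m =>
      intro x hx
      have h := Prec_eval m x
      have hsum : 0 < ∑ k ∈ Finset.range (m+1), sg (k+1) * (P (m-k)).eval x := by
        apply Finset.sum_pos
        · intro k _
          exact mul_pos (sg_pos k) (ih (m-k) (by omega) x hx)
        · exact ⟨0, Finset.mem_range.mpr (Nat.succ_pos m)⟩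
      have hm : (0:ℝ) < (m:ℝ) + 1 := by positivity
      nlinarith [mul_pos hx hsum]

/-- P_{n+1}(x) ≥ (x/2) P_{n+1}(2) for x ≥ 2 -/
lemma Pmono : ∀ n, ∀ x : ℝ, 2 ≤ x → x/2 * (P (n+1)).eval 2 ≤ (P (n+1)).eval x := by
  intro n
  induction n using Nat.strong_induction_on with
  | _ n ih =>
    intro x hx
    have h2 := Prec_eval n 2
    have hx' := Prec_eval n x
    have key : ∑ k ∈ Finset.range (n+1), sg (k+1) * (P (n-k)).eval 2
        ≤ ∑ k ∈ Finset.range (n+1), sg (k+1) * (P (n-k)).eval x := by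
      apply Finset.sum_le_sum
      intro k hk
      have hk' : k < n + 1 := Finset.mem_range.mp hk
      rcases Nat.eq_zero_or_pos (n-k) with h0 | hpos
      · rw [h0]; simp [P]
      · obtain ⟨m, hm⟩ : ∃ m, n - k = m + 1 := ⟨n-k-1, by omega⟩
        have hih := ih m (by omega) x hx
        rw [hm]
        have hp2 : 0 < (P (m+1)).eval 2 := Ppos (m+1) 2 (by norm_num)
        have hs := sg_pos k
        have h1 : (P (m+1)).eval 2 ≤ (P (m+1)).eval x := by nlinarith
        exact mul_le_mul_of_nonneg_left h1 hs.le
    have hn : (0:ℝ) < (n:ℝ)+1 := by positivity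
    have main : ((n:ℝ)+1) * (x/2 * (P (n+1)).eval 2) ≤ ((n:ℝ)+1) * (P (n+1)).eval x := by
      have h1 : ((n:ℝ)+1) * (x/2 * (P (n+1)).eval 2) = x/2 * (((n:ℝ)+1) * (P (n+1)).eval 2) := by
        ring
      rw [h1, h2, hx']
      have hx0 : (0:ℝ) ≤ x := by linarith
      nlinarith [mul_le_mul_of_nonneg_left key hx0]
    exact le_of_mul_le_mul_left main hn

lemma Plow (n : ℕ) (x : ℝ) (hx : 2 ≤ x) :
    x^2/4 * ((P (n+1)).eval 2) - x^2/2 * (sg (n+1) / ((n:ℝ)+1)) ≤ (P (n+1)).eval x := by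
  have h2 := Prec_eval n 2
  have hx' := Prec_eval n x
  rw [Finset.sum_range_succ] at h2 hx'
  have hnn : n - n = 0 := Nat.sub_self n
  rw [hnn] at h2 hx'
  have hP0 : (P 0).eval 2 = 1 := by simp [P]
  have hP0x : (P 0).eval x = 1 := by simp [P]
  rw [hP0] at h2
  rw [hP0x] at hx'
  have key : ∀ k ∈ Finset.range n, x/2 * (sg (k+1) * (P (n-k)).eval 2)
      ≤ sg (k+1) * (P (n-k)).eval x := by
    intro k hk
    have hk' : k < n := Finset.mem_range.mp hk
    obtain ⟨m, hm⟩ : ∃ m, n - k = m + 1 := ⟨n-k-1, by omega⟩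
    rw [hm]
    have hih := Pmono m x hx
    have hs := sg_pos k
    nlinarith
  have keysum : x/2 * ∑ k ∈ Finset.range n, sg (k+1) * (P (n-k)).eval 2
      ≤ ∑ k ∈ Finset.range n, sg (k+1) * (P (n-k)).eval x := by
    rw [Finset.mul_sum]
    exact Finset.sum_le_sum key
  have hn : (0:ℝ) < (n:ℝ)+1 := by positivity
  have hs := sg_pos n
  have hx0 : (0:ℝ) < x := by linarith
  have main : ((n:ℝ)+1) * (x^2/4 * ((P (n+1)).eval 2) - x^2/2 * (sg (n+1) / ((n:ℝ)+1)))
      ≤ ((n:ℝ)+1) * (P (n+1)).eval x := by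
    have hfs : ((n:ℝ)+1) * (x^2/2 * (sg (n+1) / ((n:ℝ)+1))) = x^2/2 * sg (n+1) := by
      field_simp
    have expand : ((n:ℝ)+1) * (x^2/4 * ((P (n+1)).eval 2) - x^2/2 * (sg (n+1) / ((n:ℝ)+1)))
        = x^2/4 * (((n:ℝ)+1) * (P (n+1)).eval 2) - x^2/2 * sg (n+1) := by
      rw [mul_sub, hfs]; ring
    rw [expand, h2, hx']
    nlinarith [mul_le_mul_of_nonneg_left keysum (le_of_lt hx0)]
  exact le_of_mul_le_mul_left main hn

lemma bigsum (N : ℝ) : ∀ m : ℕ, ∑ k ∈ Finset.range m, ((k:ℝ)+1)*((N - k)+1)*((N - k)+2)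
    = 13*m/6 + 3*(m:ℝ)^2/4 - 7*(m:ℝ)^3/6 + (m:ℝ)^4/4
      + N*(13*m/6 + 3*(m:ℝ)^2/2 - 2*(m:ℝ)^3/3) + N^2*((m:ℝ)/2 + (m:ℝ)^2/2) := by
  intro m
  induction m with
  | zero => simp
  | succ m ih => rw [Finset.sum_range_succ, ih]; push_cast; ring

lemma dv1 : (∑ d ∈ (1:ℕ).divisors, d) = 1 := by decide
lemma dv2 : (∑ d ∈ (2:ℕ).divisors, d) = 3 := by decide
lemma dv3 : (∑ d ∈ (3:ℕ).divisors, d) = 4 := by decide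

lemma sg1 : sg 1 = 1 := by unfold sg; rw [dv1]; norm_num
lemma sg2 : sg 2 = 3 := by unfold sg; rw [dv2]; norm_num
lemma sg3 : sg 3 = 4 := by unfold sg; rw [dv3]; norm_num

lemma evP0 (x : ℝ) : (P 0).eval x = 1 := by simp [P]

lemma evP1 (x : ℝ) : (P 1).eval x = x := by
  have h := Prec_eval 0 x
  rw [Finset.sum_range_one] at h
  norm_num [evP0, sg1] at h
  linarith

lemma evP2 (x : ℝ) : (P 2).eval x = (x^2 + 3*x)/2 := by
  have h := Prec_eval 1 x
  rw [Finset.sum_range_succ, Finset.sum_range_one] at h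
  norm_num [evP0, evP1, sg1, sg2] at h
  nlinarith [h]

lemma evP3 (x : ℝ) : (P 3).eval x = x*(x^2+9*x+8)/6 := by
  have h := Prec_eval 2 x
  rw [Finset.sum_range_succ, Finset.sum_range_succ, Finset.sum_range_one] at h
  norm_num [evP0, evP1, evP2, sg1, sg2, sg3] at h
  nlinarith [h]

lemma P2step (n : ℕ) (h : ∀ m, m ≤ n → ((m:ℝ)+1)*((m:ℝ)+2)/3 ≤ (P m).eval 2) :
    ((n:ℝ)+2)*((n:ℝ)+3)*((n:ℝ)+4)/18 ≤ (P (n+1)).eval 2 := by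
  have hr := Prec_eval n 2
  have key : ∑ k ∈ Finset.range (n+1), ((k:ℝ)+1)*((((n:ℝ)-k)+1)*((((n:ℝ)-k))+2)/3)
      ≤ ∑ k ∈ Finset.range (n+1), sg (k+1) * (P (n-k)).eval 2 := by
    apply Finset.sum_le_sum
    intro k hk
    have hk' : k ≤ n := by
      have := Finset.mem_range.mp hk; omega
    have hcast : ((n - k : ℕ):ℝ) = (n:ℝ) - (k:ℝ) := by
      push_cast [Nat.cast_sub hk']; ring
    have h1 := h (n-k) (by omega)
    rw [hcast] at h1
    have h2 := sg_ge k
    have hq : (0:ℝ) ≤ (((n:ℝ)-k)+1)*((((n:ℝ)-k))+2)/3 := by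
      have : (0:ℝ) ≤ (n:ℝ) - k := by
        have : (k:ℝ) ≤ (n:ℝ) := by exact_mod_cast hk'
        linarith
      nlinarith
    have hk1 : (0:ℝ) ≤ (k:ℝ)+1 := by positivity
    calc ((k:ℝ)+1)*((((n:ℝ)-k)+1)*((((n:ℝ)-k))+2)/3)
        ≤ sg (k+1) * ((((n:ℝ)-k)+1)*((((n:ℝ)-k))+2)/3) := by
          exact mul_le_mul_of_nonneg_right h2 hq
      _ ≤ sg (k+1) * (P (n-k)).eval 2 := by
          exact mul_le_mul_of_nonneg_left h1 (le_of_lt (sg_pos k))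
  have hb := bigsum (n:ℝ) (n+1)
  have hsum3 : ∑ k ∈ Finset.range (n+1), ((k:ℝ)+1)*((((n:ℝ)-k)+1)*((((n:ℝ)-k))+2)/3)
      = (∑ k ∈ Finset.range (n+1), ((k:ℝ)+1)*(((n:ℝ)-k)+1)*(((n:ℝ)-k)+2))/3 := by
    rw [Finset.sum_div]
    apply Finset.sum_congr rfl
    intro k _; ring
  rw [hsum3, hb] at key
  have hn : (0:ℝ) < (n:ℝ)+1 := by positivity
  have main : ((n:ℝ)+1) * (((n:ℝ)+2)*((n:ℝ)+3)*((n:ℝ)+4)/18) ≤ ((n:ℝ)+1) * (P (n+1)).eval 2 := by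
    rw [hr]
    push_cast at key
    nlinarith [key]
  exact le_of_mul_le_mul_left main hn

lemma P2quad : ∀ n : ℕ, ((n:ℝ)+1)*((n:ℝ)+2)/3 ≤ (P n).eval 2 := by
  intro n
  induction n using Nat.strong_induction_on with
  | _ n ih =>
    match n with
    | 0 => norm_num [P]
    | 1 => rw [evP1]; norm_num
    | 2 => rw [evP2]; norm_num
    | Nat.succ (Nat.succ (Nat.succ m)) =>
      have hs := P2step (m+2) (fun j hj => ih j (by omega))
      have he : Nat.succ (Nat.succ (Nat.succ m)) = m + 2 + 1 := rfl
      rw [he]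
      push_cast at hs ⊢
      have hm0 : (0:ℝ) ≤ (m:ℝ) := Nat.cast_nonneg m
      nlinarith [hs, mul_nonneg (mul_nonneg (by linarith : (0:ℝ) ≤ (m:ℝ)+4)
        (by linarith : (0:ℝ) ≤ (m:ℝ)+5)) hm0]

lemma P2cubic (n : ℕ) : ((n:ℝ)+2)*((n:ℝ)+3)*((n:ℝ)+4)/18 ≤ (P (n+1)).eval 2 :=
  P2step n (fun j _ => P2quad j)


lemma tri {M : Type*} [AddCommMonoid M] (f : ℕ → ℕ → M) :
    ∀ n, ∑ k ∈ Finset.range n, ∑ j ∈ Finset.range (n - k), f k j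
       = ∑ j ∈ Finset.range n, ∑ k ∈ Finset.range (n - j), f k j := by
  intro n
  induction n with
  | zero => simp
  | succ n ih =>
    have split : ∀ g : ℕ → ℕ → M,
        ∑ k ∈ Finset.range (n+1), ∑ j ∈ Finset.range (n+1-k), g k j
        = (∑ k ∈ Finset.range n, ∑ j ∈ Finset.range (n-k), g k j)
          + ∑ k ∈ Finset.range (n+1), g k (n-k) := by
      intro g
      have h1 : ∀ k ∈ Finset.range (n+1), ∑ j ∈ Finset.range (n+1-k), g k j
          = (∑ j ∈ Finset.range (n-k), g k j) + g k (n-k) := by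
        intro k hk
        have hk' : k ≤ n := by have := Finset.mem_range.mp hk; omega
        have : n + 1 - k = (n - k) + 1 := by omega
        rw [this, Finset.sum_range_succ]
      rw [Finset.sum_congr rfl h1, Finset.sum_add_distrib]
      congr 1
      rw [Finset.sum_range_succ, Nat.sub_self, Finset.range_zero, Finset.sum_empty, add_zero]
    rw [split f, split (fun k j => f j k)]
    rw [ih]
    congr 1
    conv_rhs => rw [← Finset.sum_range_reflect]
    apply Finset.sum_congr rfl
    intro k hk
    have hk' : k ≤ n := by have := Finset.mem_range.mp hk; omega
    have e1 : n + 1 - 1 - k = n - k := by omega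
    have e2 : n - (n - k) = k := by omega
    simp only [e1, e2]

lemma tri' {M : Type*} [AddCommMonoid M] (f : ℕ → ℕ → M) (n : ℕ) :
    ∑ k ∈ Finset.range (n+1), ∑ j ∈ Finset.range (n - k), f k j
       = ∑ j ∈ Finset.range (n+1), ∑ k ∈ Finset.range (n - j), f k j := by
  rw [Finset.sum_range_succ, Finset.sum_range_succ, Nat.sub_self]
  simp only [Finset.range_zero, Finset.sum_empty, add_zero]
  exact tri f n

/-- uniform recurrence, also valid at 0 -/
lemma hrec (m : ℕ) : ((m:ℝ)) • P m = X * ∑ j ∈ Finset.range m, sg (j+1) • P (m - 1 - j) := by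
  match m with
  | 0 => simp
  | Nat.succ t =>
    have h := Prec t
    push_cast
    rw [h]

lemma Pd : ∀ n : ℕ, Polynomial.derivative (P (n+1))
    = ∑ k ∈ Finset.range (n+1), (sg (k+1)/((k:ℝ)+1)) • P (n - k) := by
  intro n
  induction n using Nat.strong_induction_on with
  | _ n ih =>
    have hder : ∀ m, m ≤ n → Polynomial.derivative (P m)
        = ∑ j ∈ Finset.range m, (sg (j+1)/((j:ℝ)+1)) • P (m - 1 - j) := by
      intro m hm
      match m with
      | 0 => simp [P]
      | Nat.succ t =>
        rw [ih t (by omega)]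
        apply Finset.sum_congr rfl
        intro j hj
        have e : t - j = t + 1 - 1 - j := by omega
        rw [e]
    -- LHS computation
    have hA : ((n:ℝ)+1) • Polynomial.derivative (P (n+1))
        = (∑ k ∈ Finset.range (n+1), sg (k+1) • P (n - k))
          + X * ∑ k ∈ Finset.range (n+1), ∑ j ∈ Finset.range (n - k),
              (sg (k+1) * (sg (j+1)/((j:ℝ)+1))) • P (n - k - 1 - j) := by
      have h0 := congrArg Polynomial.derivative (Prec n)
      rw [Polynomial.derivative_smul, Polynomial.derivative_mul, Polynomial.derivative_X,
        one_mul] at h0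
      rw [h0]
      congr 1
      rw [Polynomial.derivative_sum]
      rw [Finset.mul_sum, Finset.mul_sum]
      apply Finset.sum_congr rfl
      intro k hk
      have hk' : k ≤ n := by have := Finset.mem_range.mp hk; omega
      rw [Polynomial.derivative_smul, hder (n-k) (by omega), Finset.smul_sum, Finset.mul_sum,
        Finset.mul_sum]
      apply Finset.sum_congr rfl
      intro j hj
      rw [smul_smul, mul_smul_comm]
    -- RHS computation
    have hB : ((n:ℝ)+1) • (∑ k ∈ Finset.range (n+1), (sg (k+1)/((k:ℝ)+1)) • P (n - k))
        = (∑ k ∈ Finset.range (n+1), sg (k+1) • P (n - k))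
          + X * ∑ k ∈ Finset.range (n+1), ∑ j ∈ Finset.range (n - k),
              ((sg (k+1)/((k:ℝ)+1)) * sg (j+1)) • P (n - k - 1 - j) := by
      rw [Finset.smul_sum, Finset.mul_sum, ← Finset.sum_add_distrib]
      apply Finset.sum_congr rfl
      intro k hk
      have hk' : k ≤ n := by have := Finset.mem_range.mp hk; omega
      have hsplit : ((n:ℝ)+1) = ((k:ℝ)+1) + ((n - k : ℕ):ℝ) := by
        push_cast [Nat.cast_sub hk']; ring
      rw [hsplit, add_smul, smul_smul, mul_div_cancel₀ _ (by positivity : ((k:ℝ)+1) ≠ 0)]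
      congr 1
      rw [smul_comm, hrec (n-k), ← mul_smul_comm, Finset.smul_sum]
      congr 1
      apply Finset.sum_congr rfl
      intro j hj
      rw [smul_smul]
    -- swap double sum in hA via tri'
    have hswap : (∑ k ∈ Finset.range (n+1), ∑ j ∈ Finset.range (n - k),
              (sg (k+1) * (sg (j+1)/((j:ℝ)+1))) • P (n - k - 1 - j))
        = ∑ k ∈ Finset.range (n+1), ∑ j ∈ Finset.range (n - k),
              ((sg (k+1)/((k:ℝ)+1)) * sg (j+1)) • P (n - k - 1 - j) := by
      rw [tri' (fun k j => (sg (k+1) * (sg (j+1)/((j:ℝ)+1))) • P (n - k - 1 - j)) n]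
      apply Finset.sum_congr rfl
      intro k hk
      apply Finset.sum_congr rfl
      intro j hj
      have e : n - j - 1 - k = n - k - 1 - j := by omega
      rw [e]
      congr 1
      ring
    rw [hswap] at hA
    have hn0 : ((n:ℝ)+1) ≠ 0 := by positivity
    have := hA.trans hB.symm
    exact smul_right_injective (Polynomial ℝ) hn0 this

set_option maxHeartbeats 2000000 in
theorem stmt14 (a : ℕ) (ha : 14 ≤ a) (F : ℕ → Polynomial ℝ)
    (hF : ∀ m, F m = Polynomial.C ((1 : ℝ) / 3) * (Polynomial.X + 4) * P (m - 1) - P m)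
    (hyp : ∀ m, 4 ≤ m → m < a → ∀ x : ℝ, 2 < x → 0 < (F m).eval x) :
    ∀ x : ℝ, 2 < x → 0 < (Polynomial.derivative (F a)).eval x := by
  obtain ⟨c, rfl⟩ : ∃ c, a = c + 14 := ⟨a - 14, by omega⟩
  intro x hx
  have hx2 : (2:ℝ) ≤ x := le_of_lt hx
  have hd : (Polynomial.derivative (F (c+14))).eval x
      = 1/3 * (P (c+13)).eval x + (x+4)/3 * (Polynomial.derivative (P (c+13))).eval x
        - (Polynomial.derivative (P (c+14))).eval x := by
    rw [hF (c+14), show c+14-1 = c+13 by omega]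
    simp only [Polynomial.derivative_sub, Polynomial.derivative_mul, Polynomial.derivative_C,
      Polynomial.derivative_add, Polynomial.derivative_X, Polynomial.derivative_ofNat]
    simp only [Polynomial.eval_sub, Polynomial.eval_add, Polynomial.eval_mul, Polynomial.eval_C,
      Polynomial.eval_X, Polynomial.eval_ofNat, Polynomial.eval_zero, Polynomial.eval_one]
    ring
  have hb : (Polynomial.derivative (P (c+13))).eval x
      = ∑ k ∈ Finset.range (c+13), sg (k+1)/((k:ℝ)+1) * (P (c+12-k)).eval x := by
    rw [show c+13 = (c+12)+1 by omega, Pd (c+12)]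
    rw [Polynomial.eval_finset_sum]
    apply Finset.sum_congr rfl
    intro k hk
    rw [Polynomial.eval_smul, smul_eq_mul]
  have hA : (Polynomial.derivative (P (c+14))).eval x
      = (∑ k ∈ Finset.range (c+13), sg (k+1)/((k:ℝ)+1) * (P (c+13-k)).eval x)
        + sg (c+14)/((c:ℝ)+14) := by
    rw [show c+14 = (c+13)+1 by omega, Pd (c+13), Finset.sum_range_succ]
    rw [Polynomial.eval_add, Polynomial.eval_finset_sum]
    congr 1
    · apply Finset.sum_congr rfl
      intro k hk
      rw [Polynomial.eval_smul, smul_eq_mul]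
    · rw [Nat.sub_self, Polynomial.eval_smul, smul_eq_mul, evP0]
      push_cast
      ring
  have hsum : (x+4)/3 * (∑ k ∈ Finset.range (c+13), sg (k+1)/((k:ℝ)+1) * (P (c+12-k)).eval x)
        - (∑ k ∈ Finset.range (c+13), sg (k+1)/((k:ℝ)+1) * (P (c+13-k)).eval x)
      = ∑ k ∈ Finset.range (c+13), sg (k+1)/((k:ℝ)+1) * (F (c+13-k)).eval x := by
    rw [Finset.mul_sum, ← Finset.sum_sub_distrib]
    apply Finset.sum_congr rfl
    intro k hk
    have hk' : k ≤ c+12 := by have := Finset.mem_range.mp hk; omega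
    have hFe : (F (c+13-k)).eval x
        = (x+4)/3 * (P (c+12-k)).eval x - (P (c+13-k)).eval x := by
      rw [hF (c+13-k), show c+13-k-1 = c+12-k by omega]
      simp only [Polynomial.eval_sub, Polynomial.eval_add, Polynomial.eval_mul,
        Polynomial.eval_C, Polynomial.eval_X, Polynomial.eval_ofNat]
      ring
    rw [hFe]
    ring
  have hsplit3 : ∑ k ∈ Finset.range (c+13), sg (k+1)/((k:ℝ)+1) * (F (c+13-k)).eval x
      = (∑ k ∈ Finset.range (c+10), sg (k+1)/((k:ℝ)+1) * (F (c+13-k)).eval x)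
        + sg (c+11)/((c:ℝ)+11) * (F 3).eval x + sg (c+12)/((c:ℝ)+12) * (F 2).eval x
        + sg (c+13)/((c:ℝ)+13) * (F 1).eval x := by
    rw [show c+13 = (c+12)+1 by omega, Finset.sum_range_succ,
      show c+12 = (c+11)+1 by omega, Finset.sum_range_succ,
      show c+11 = (c+10)+1 by omega, Finset.sum_range_succ]
    have e1 : c+10+1+1+1 - (c+10) = 3 := by omega
    have e2 : c+10+1+1+1 - (c+10+1) = 2 := by omega
    have e3 : c+10+1+1+1 - (c+10+1+1) = 1 := by omega
    rw [e1, e2, e3]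
    push_cast
    ring
  -- positivity of the head sum
  have htpos : ∀ k : ℕ, 0 < sg (k+1)/((k:ℝ)+1) := fun k => div_pos (sg_pos k) (by positivity)
  have hS' : 0 ≤ ∑ k ∈ Finset.range (c+10), sg (k+1)/((k:ℝ)+1) * (F (c+13-k)).eval x := by
    apply Finset.sum_nonneg
    intro k hk
    have hk' : k < c+10 := Finset.mem_range.mp hk
    have h4 : 4 ≤ c+13-k := by omega
    have hlt : c+13-k < c+14 := by omega
    exact le_of_lt (mul_pos (htpos k) (hyp (c+13-k) h4 hlt x hx))
  -- explicit small F evals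
  have hF1 : (F 1).eval x = (4-2*x)/3 := by
    rw [hF 1]
    simp only [Polynomial.eval_sub, Polynomial.eval_add, Polynomial.eval_mul,
      Polynomial.eval_C, Polynomial.eval_X, Polynomial.eval_ofNat]
    rw [show (1:ℕ)-1 = 0 by omega, evP0, evP1]
    ring
  have hF2 : (F 2).eval x = -(x^2+x)/6 := by
    rw [hF 2]
    simp only [Polynomial.eval_sub, Polynomial.eval_add, Polynomial.eval_mul,
      Polynomial.eval_C, Polynomial.eval_X, Polynomial.eval_ofNat]
    rw [show (2:ℕ)-1 = 1 by omega, evP1, evP2]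
    ring
  have hF3 : (F 3).eval x = x*(4-2*x)/6 := by
    rw [hF 3]
    simp only [Polynomial.eval_sub, Polynomial.eval_add, Polynomial.eval_mul,
      Polynomial.eval_C, Polynomial.eval_X, Polynomial.eval_ofNat]
    rw [show (3:ℕ)-1 = 2 by omega, evP2, evP3]
    ring
  -- t bounds
  have htle : ∀ k : ℕ, sg (k+1)/((k:ℝ)+1) ≤ ((k:ℝ)+2)/2 := by
    intro k
    rw [div_le_div_iff₀ (by positivity) (by norm_num)]
    nlinarith [sg_le k]
  have ht10 : sg (c+11)/((c:ℝ)+11) ≤ ((c:ℝ)+12)/2 := by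
    have h := htle (c+10)
    rw [show c+10+1 = c+11 by omega] at h
    push_cast at h
    rw [show (c:ℝ)+10+1 = (c:ℝ)+11 by ring] at h
    linarith
  have ht11 : sg (c+12)/((c:ℝ)+12) ≤ ((c:ℝ)+13)/2 := by
    have h := htle (c+11)
    rw [show c+11+1 = c+12 by omega] at h
    push_cast at h
    rw [show (c:ℝ)+11+1 = (c:ℝ)+12 by ring] at h
    linarith
  have ht12 : sg (c+13)/((c:ℝ)+13) ≤ ((c:ℝ)+14)/2 := by
    have h := htle (c+12)
    rw [show c+12+1 = c+13 by omega] at h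
    push_cast at h
    rw [show (c:ℝ)+12+1 = (c:ℝ)+13 by ring] at h
    linarith
  have hL : sg (c+14)/((c:ℝ)+14) ≤ ((c:ℝ)+15)/2 := by
    have h := htle (c+13)
    rw [show c+13+1 = c+14 by omega] at h
    push_cast at h
    rw [show (c:ℝ)+13+1 = (c:ℝ)+14 by ring] at h
    linarith
  -- tail term bounds
  have hT3 : ((c:ℝ)+12)/2 * (x*(4-2*x)/6) ≤ sg (c+11)/((c:ℝ)+11) * (F 3).eval x := by
    rw [hF3]
    exact mul_le_mul_of_nonpos_right ht10 (by nlinarith)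
  have hT2 : ((c:ℝ)+13)/2 * (-(x^2+x)/6) ≤ sg (c+12)/((c:ℝ)+12) * (F 2).eval x := by
    rw [hF2]
    exact mul_le_mul_of_nonpos_right ht11 (by nlinarith)
  have hT1 : ((c:ℝ)+14)/2 * ((4-2*x)/3) ≤ sg (c+13)/((c:ℝ)+13) * (F 1).eval x := by
    rw [hF1]
    exact mul_le_mul_of_nonpos_right ht12 (by nlinarith)
  -- main positive term lower bound
  have hE : x^2/4*(((c:ℝ)+14)*((c:ℝ)+15)*((c:ℝ)+16)/18) - x^2*((c:ℝ)+14)/4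
      ≤ (P (c+13)).eval x := by
    have h3 := Plow (c+12) x hx2
    have hcub := P2cubic (c+12)
    rw [show c+12+1 = c+13 by omega] at h3 hcub
    push_cast at h3 hcub
    rw [show (c:ℝ)+12+1 = (c:ℝ)+13 by ring] at h3
    have h1 : x^2/4 * ((((c:ℝ)+14)*((c:ℝ)+15)*((c:ℝ)+16))/18) ≤ x^2/4*((P (c+13)).eval 2) := by
      apply mul_le_mul_of_nonneg_left _ (by positivity)
      nlinarith [hcub]
    have h2 : x^2/2 * (sg (c+13)/((c:ℝ)+13)) ≤ x^2/2 * (((c:ℝ)+14)/2) :=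
      mul_le_mul_of_nonneg_left (by linarith [ht12]) (by positivity)
    linarith [h1, h2, h3]
  -- assemble
  rw [hd, hb, hA, show (1:ℝ)/3 * (P (c+13)).eval x
      + (x+4)/3 * (∑ k ∈ Finset.range (c+13), sg (k+1)/((k:ℝ)+1) * (P (c+12-k)).eval x)
      - ((∑ k ∈ Finset.range (c+13), sg (k+1)/((k:ℝ)+1) * (P (c+13-k)).eval x)
        + sg (c+14)/((c:ℝ)+14))
    = 1/3 * (P (c+13)).eval x
      + ((x+4)/3 * (∑ k ∈ Finset.range (c+13), sg (k+1)/((k:ℝ)+1) * (P (c+12-k)).eval x)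
        - (∑ k ∈ Finset.range (c+13), sg (k+1)/((k:ℝ)+1) * (P (c+13-k)).eval x))
      - sg (c+14)/((c:ℝ)+14) by ring, hsum, hsplit3]
  have hc0 : (0:ℝ) ≤ (c:ℝ) := Nat.cast_nonneg c
  nlinarith [hS', hT3, hT2, hT1, hL, hE, sq_nonneg x, sq_nonneg (x-2),
    mul_nonneg hc0 (sq_nonneg (x-2)), mul_nonneg hc0 (sq_nonneg x),
    mul_nonneg (mul_nonneg hc0 hc0) (sq_nonneg x),
    mul_nonneg (mul_nonneg (mul_nonneg hc0 hc0) hc0) (sq_nonneg x),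
    mul_nonneg (mul_nonneg hc0 hc0) (sq_nonneg (x-2)),
    mul_nonneg (mul_nonneg (mul_nonneg hc0 hc0) hc0) (sq_nonneg (x-2))]
end

section
/- For b ∈ {0,1,2,3,4,6}, the function x ↦ P_{b+1}(x)/P_b(x) − x/(b+1) is monotonically increasing on (0,∞); for b = 5 this function is monotonically increasing on [0.776, ∞). Equivalently, the polynomial P_{b+1}′(x)·P_b(x) − P_{b+1}(x)·P_b′(x) − (1/(b+1))·P_b(x)² is nonnegative on the respective intervals. -/
open Polynomial Finset

/-!
The polynomials `P 0, …, P 7` are computed from the recurrence. Since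
`(N/D - x/m)' = (N'D - ND' - D²/m)/D²` and `P b > 0` on `(0, ∞)`, monotonicity reduces to the
nonnegativity of the numerator. For `b ≠ 5` the numerator is a polynomial with nonnegative
coefficients; for `b = 5` it becomes one after the substitution `x = 0.776 + t`.
-/

open ArithmeticFunction
open scoped ArithmeticFunction.sigma

noncomputable def quotientDerivNumerator (N D : ℝ[X]) (m x : ℝ) : ℝ :=
  (derivative N * D - N * derivative D).eval x - 1 / m * (D.eval x) ^ 2

lemma hasDerivAt_eval_div_eval_sub (N D : ℝ[X]) (m : ℝ) {x : ℝ} (hx : D.eval x ≠ 0) :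
    HasDerivAt (fun y => N.eval y / D.eval y - y / m)
      (quotientDerivNumerator N D m x / D.eval x ^ 2) x := by
  refine (((N.hasDerivAt x).div (D.hasDerivAt x) hx).sub
    ((hasDerivAt_id' x).div_const m)).congr_deriv ?_
  simp only [quotientDerivNumerator, eval_sub, eval_mul]
  field_simp

lemma monotoneOn_eval_div_eval_sub (N D : ℝ[X]) (m : ℝ) {s : Set ℝ} (hs : Convex ℝ s)
    (hD : ∀ x ∈ s, 0 < D.eval x)
    (hN : ∀ x ∈ interior s, 0 ≤ quotientDerivNumerator N D m x) :
    MonotoneOn (fun x => N.eval x / D.eval x - x / m) s := by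
  have hderiv (x) (hx : x ∈ s) := hasDerivAt_eval_div_eval_sub N D m (hD x hx).ne'
  refine monotoneOn_of_hasDerivWithinAt_nonneg hs
    (fun x hx => (hderiv x hx).continuousAt.continuousWithinAt)
    (fun x hx => (hderiv x (interior_subset hx)).hasDerivWithinAt) fun x hx => ?_
  exact div_nonneg (hN x hx) (sq_nonneg _)

lemma eval_P_succ (n : ℕ) (x : ℝ) :
    (P (n + 1)).eval x =
      x / (n + 1) * ∑ k ∈ range (n + 1), (σ 1 (k + 1) : ℝ) * (P (n - k)).eval x := by
  rw [P]
  simp only [Nat.cast_sum, eval_smul, eval_mul, eval_X, eval_finsetSum, smul_eq_mul,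
    sigma_one_apply]
  ring

lemma P_zero : P 0 = 1 := by rw [P]

lemma eval_P_pos (n : ℕ) {x : ℝ} (hx : 0 < x) : 0 < (P n).eval x := by
  induction n using Nat.strong_induction_on with
  | _ n ih =>
    rcases n with _ | n
    · simp [P_zero]
    · rw [eval_P_succ]
      refine mul_pos (by positivity) (sum_pos (fun k _ => mul_pos ?_ (ih _ (by omega)))
        nonempty_range_add_one)
      exact_mod_cast sigma_pos 1 (k + 1) k.succ_ne_zero

lemma P_one : P 1 = X := Polynomial.funext fun x => by simp [eval_P_succ, P_zero]

lemma P_two : P 2 = C (3/2) * X + C (1/2) * X ^ 2 := Polynomial.funext fun x => by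
  rw [eval_P_succ]
  simp [sum_range_succ, sigma_one_apply, Nat.divisors_ofNat, P_zero, P_one]
  ring

lemma P_three :
    P 3 = C (4/3) * X + C (3/2) * X ^ 2 + C (1/6) * X ^ 3 := Polynomial.funext fun x => by
  rw [eval_P_succ]
  simp [sum_range_succ, sigma_one_apply, Nat.divisors_ofNat, P_zero, P_one, P_two]
  ring

lemma P_four : P 4 = C (7/4) * X + C (59/24) * X ^ 2 + C (3/4) * X ^ 3 + C (1/24) * X ^ 4 :=
    Polynomial.funext fun x => by
  rw [eval_P_succ]
  simp [sum_range_succ, sigma_one_apply, Nat.divisors_ofNat, P_zero, P_one, P_two, P_three]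
  ring

lemma P_five : P 5 = C (6/5) * X + C (15/4) * X ^ 2 + C (43/24) * X ^ 3 + C (1/4) * X ^ 4
    + C (1/120) * X ^ 5 := Polynomial.funext fun x => by
  rw [eval_P_succ]
  simp [sum_range_succ, sigma_one_apply, Nat.divisors_ofNat, P_zero, P_one, P_two, P_three, P_four]
  ring

lemma P_six : P 6 = C 2 * X + C (1697/360) * X ^ 2 + C (55/16) * X ^ 3 + C (113/144) * X ^ 4
    + C (1/16) * X ^ 5 + C (1/720) * X ^ 6 := Polynomial.funext fun x => by
  rw [eval_P_succ]
  simp [sum_range_succ, sigma_one_apply, Nat.divisors_ofNat, P_zero, P_one, P_two, P_three, P_four,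
    P_five]
  ring

lemma P_seven : P 7 = C (8/7) * X + C (92/15) * X ^ 2 + C (2021/360) * X ^ 3 + C (89/48) * X ^ 4
    + C (35/144) * X ^ 5 + C (1/80) * X ^ 6 + C (1/5040) * X ^ 7 := Polynomial.funext fun x => by
  rw [eval_P_succ]
  simp [sum_range_succ, sigma_one_apply, Nat.divisors_ofNat, P_zero, P_one, P_two, P_three, P_four,
    P_five, P_six]
  ring

section Numerators

variable (x : ℝ)

lemma quotientDerivNumerator_P_one_P_zero : quotientDerivNumerator (P 1) (P 0) 1 x = 0 := by
  simp [quotientDerivNumerator, P_zero, P_one]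

lemma quotientDerivNumerator_P_two_P_one : quotientDerivNumerator (P 2) (P 1) 2 x = 0 := by
  simp [quotientDerivNumerator, P_one, P_two]
  ring

lemma quotientDerivNumerator_P_three_P_two :
    quotientDerivNumerator (P 3) (P 2) 3 x = 5/6 * x ^ 2 := by
  simp [quotientDerivNumerator, P_two, P_three]
  ring

lemma quotientDerivNumerator_P_four_P_three :
    quotientDerivNumerator (P 4) (P 3) 4 x = 5/24 * x ^ 2 * (1 + x) ^ 2 := by
  simp [quotientDerivNumerator, P_three, P_four]
  ring

lemma quotientDerivNumerator_P_five_P_four :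
    quotientDerivNumerator (P 5) (P 4) 5 x =
      3 * x ^ 2 + 11/4 * x ^ 3 + 49/48 * x ^ 4 + 5/24 * x ^ 5 + 1/48 * x ^ 6 := by
  simp [quotientDerivNumerator, P_four, P_five]
  ring

lemma quotientDerivNumerator_P_six_P_five :
    quotientDerivNumerator (P 6) (P 5) 6 x =
      -25/12 * x ^ 2 - 5/12 * x ^ 3 + 2341/864 * x ^ 4 + 64/45 * x ^ 5 + 125/432 * x ^ 6
        + 1/36 * x ^ 7 + 1/864 * x ^ 8 := by
  simp [quotientDerivNumerator, P_five, P_six]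
  ring

lemma quotientDerivNumerator_P_seven_P_six :
    quotientDerivNumerator (P 7) (P 6) 7 x =
      1987/315 * x ^ 2 + 250/21 * x ^ 3 + 52471/6048 * x ^ 4 + 26825/6048 * x ^ 5
        + 38513/24192 * x ^ 6 + 343/1080 * x ^ 7 + 409/12096 * x ^ 8 + 11/6048 * x ^ 9
        + 1/24192 * x ^ 10 := by
  simp [quotientDerivNumerator, P_six, P_seven]
  ring

end Numerators

lemma quotientDerivNumerator_P_succ_nonneg {b : ℕ}
    (hb : b = 0 ∨ b = 1 ∨ b = 2 ∨ b = 3 ∨ b = 4 ∨ b = 6) {x : ℝ} (hx : 0 < x) :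
    0 ≤ quotientDerivNumerator (P (b + 1)) (P b) (b + 1) x := by
  rcases hb with rfl | rfl | rfl | rfl | rfl | rfl
  · norm_num [quotientDerivNumerator_P_one_P_zero]
  · norm_num [quotientDerivNumerator_P_two_P_one]
  · norm_num [quotientDerivNumerator_P_three_P_two]
    positivity
  · norm_num [quotientDerivNumerator_P_four_P_three]
    positivity
  · norm_num [quotientDerivNumerator_P_five_P_four]
    positivity
  · norm_num [quotientDerivNumerator_P_seven_P_six]
    positivity

lemma quotientDerivNumerator_P_six_P_five_nonneg {x : ℝ} (hx : 0.776 ≤ x) :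
    0 ≤ quotientDerivNumerator (P 6) (P 5) 6 x := by
  have ht : 0 ≤ x - 0.776 := sub_nonneg.mpr hx
  rw [quotientDerivNumerator_P_six_P_five]
  linarith [pow_nonneg ht 2, pow_nonneg ht 3, pow_nonneg ht 4, pow_nonneg ht 5,
    pow_nonneg ht 6, pow_nonneg ht 7, pow_nonneg ht 8]

theorem stmt16 :
    (∀ b : ℕ, b = 0 ∨ b = 1 ∨ b = 2 ∨ b = 3 ∨ b = 4 ∨ b = 6 →
      MonotoneOn (fun x : ℝ => (P (b + 1)).eval x / (P b).eval x - x / (b + 1))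
        (Set.Ioi 0) ∧
      ∀ x : ℝ, 0 < x →
        0 ≤ (Polynomial.derivative (P (b + 1)) * P b
              - P (b + 1) * Polynomial.derivative (P b)).eval x
            - (1 / (b + 1 : ℝ)) * ((P b).eval x) ^ 2) ∧
    (MonotoneOn (fun x : ℝ => (P 6).eval x / (P 5).eval x - x / 6)
        (Set.Ici (0.776 : ℝ)) ∧
      ∀ x : ℝ, (0.776 : ℝ) ≤ x →
        0 ≤ (Polynomial.derivative (P 6) * P 5
              - P 6 * Polynomial.derivative (P 5)).eval x
            - (1 / 6 : ℝ) * ((P 5).eval x) ^ 2) := by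
  refine ⟨fun b hb => ⟨?_, fun x hx => quotientDerivNumerator_P_succ_nonneg hb hx⟩, ?_,
    fun x hx => quotientDerivNumerator_P_six_P_five_nonneg hx⟩
  · exact monotoneOn_eval_div_eval_sub _ _ _ (convex_Ioi 0) (fun x hx => eval_P_pos b hx)
      fun x hx => quotientDerivNumerator_P_succ_nonneg hb (interior_subset hx)
  · exact monotoneOn_eval_div_eval_sub _ _ _ (convex_Ici _)
      (fun x hx => eval_P_pos 5 (lt_of_lt_of_le (by norm_num) hx))
      fun x hx => quotientDerivNumerator_P_six_P_five_nonneg (interior_subset hx)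
end
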